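/- Let bx₁ and bx₂ be transparent well-behaved bx over the same lawful monad m, bx₁ with state S₁ between A and B and bx₂ with state S₂ between B and C, and let bx₁ ⨟ bx₂ be their composite. Then: (i) the composite set operations satisfy the set–get laws, i.e. (do (bx₁ ⨟ bx₂).setL a'; gets (fun (s₁, s₂) => readL₁ s₁)) = (do (bx₁ ⨟ bx₂).setL a'; pure a') for all a' : A, and (do (bx₁ ⨟ bx₂).setR c'; gets (fun (s₁, s₂) => readR₂ s₂)) = (do (bx₁ ⨟ bx₂).setR c'; pure c') for all c' : C; and (ii) the composite set operations restore consistency, i.e. (do (bx₁ ⨟ bx₂).setL a'; gets (fun (s₁, s₂) => readR₁ s₁)) = (do (bx₁ ⨟ bx₂).setL a'; gets (fun (s₁, s₂) => readL₂ s₂)) for all a' : A, and (do (bx₁ ⨟ bx₂).setR c'; gets (fun (s₁, s₂) => readR₁ s₁)) = (do (bx₁ ⨟ bx₂).setR c'; gets (fun (s₁, s₂) => readL₂ s₂)) for all c' : C. -/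

import Mathlib

universe u v

def getsS {m : Type u → Type v} [Monad m] {σ α : Type u} (f : σ → α) : StateT σ m α := do
  let s ← get
  pure (f s)

/-- A transparent bidirectional transformation over the monad `m`,
with state space `S`, between `A` and `B`. -/
structure TBX (m : Type u → Type v) (S A B : Type u) where
  readL : S → A
  readR : S → B
  setL : A → StateT S m PUnit
  setR : B → StateT S m PUnit

/-- Well-behavedness of a transparent bx: the laws (S_LG_L), (G_LS_L), (S_RG_R), (G_RS_R).
(The get–get laws hold automatically since the gets are `T`-pure queries.) -/
structure TBX.WellBehaved {m : Type u → Type v} [Monad m] {S A B : Type u}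
    (bx : TBX m S A B) : Prop where
  slgl : ∀ a : A, (do bx.setL a; getsS (m := m) bx.readL) = (do bx.setL a; pure a)
  glsl : (do let a ← getsS (m := m) bx.readL; bx.setL a) = (pure PUnit.unit : StateT S m PUnit)
  srgr : ∀ b : B, (do bx.setR b; getsS (m := m) bx.readR) = (do bx.setR b; pure b)
  grsr : (do let b ← getsS (m := m) bx.readR; bx.setR b) = (pure PUnit.unit : StateT S m PUnit)

/-- Composition of transparent bx. -/
def TBX.comp {m : Type u → Type v} [Monad m] {S₁ S₂ A B C : Type u}
    (bx₁ : TBX m S₁ A B) (bx₂ : TBX m S₂ B C) : TBX m (S₁ × S₂) A C where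
  readL := fun s => bx₁.readL s.1
  readR := fun s => bx₂.readR s.2
  setL := fun a' => fun s => do
    let (_, s₁') ← (bx₁.setL a').run s.1
    let (_, s₂') ← (bx₂.setL (bx₁.readR s₁')).run s.2
    pure (PUnit.unit, (s₁', s₂'))
  setR := fun c' => fun s => do
    let (_, s₂') ← (bx₂.setR c').run s.2
    let (_, s₁') ← (bx₁.setR (bx₂.readL s₂')).run s.1
    pure (PUnit.unit, (s₁', s₂'))

/-! Unfolded at a state `(s₁, s₂)`, each composite law becomes a law of one component run inside
a larger computation: a set–get law `x; gets f = x; pure v` lets `f` be replaced by `v` on the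
states `x` produces, whatever the continuation. Consistency after `setL a` is then the set–get
law of `bx₂` at `readR₁ s₁'`, the value just handed to `bx₂.setL`. -/

@[simp]
theorem getsS_run {m : Type u → Type v} [Monad m] [LawfulMonad m] {σ α : Type u} (f : σ → α)
    (s : σ) : (getsS (m := m) f).run s = pure (f s, s) := by
  simp [getsS]

theorem StateT.run_bind_eq_of_then_getsS_eq {m : Type u → Type v} [Monad m] [LawfulMonad m]
    {σ α β : Type u} {x : StateT σ m PUnit} {f : σ → α} {v : α}
    (h : (do x; getsS (m := m) f) = (do x; pure v)) (s : σ) (k : α → σ → m β) :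
    (x.run s >>= fun p => k (f p.2) p.2) = (x.run s >>= fun p => k v p.2) := by
  simpa [StateT.run_bind] using congrArg (fun y => y.run s >>= fun q => k q.1 q.2) h

namespace TBX

variable {m : Type u → Type v} [Monad m] [LawfulMonad m] {S₁ S₂ A B C β : Type u}
  (bx₁ : TBX m S₁ A B) (bx₂ : TBX m S₂ B C)

theorem comp_setL_then_run (a : A) (g : StateT (S₁ × S₂) m β) (s : S₁ × S₂) :
    (do (bx₁.comp bx₂).setL a; g).run s =
      ((bx₁.setL a).run s.1 >>= fun p => (bx₂.setL (bx₁.readR p.2)).run s.2 >>= fun q =>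
        g.run (p.2, q.2)) := by
  simp only [StateT.run_bind]
  simp [comp, StateT.run]

theorem comp_setR_then_run (c : C) (g : StateT (S₁ × S₂) m β) (s : S₁ × S₂) :
    (do (bx₁.comp bx₂).setR c; g).run s =
      ((bx₂.setR c).run s.2 >>= fun q => (bx₁.setR (bx₂.readL q.2)).run s.1 >>= fun p =>
        g.run (p.2, q.2)) := by
  simp only [StateT.run_bind]
  simp [comp, StateT.run]

end TBX

theorem comp_set_get_laws_and_consistency_restoration
    {m : Type u → Type v} [Monad m] [LawfulMonad m] {S₁ S₂ A B C : Type u}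
    (bx₁ : TBX m S₁ A B) (bx₂ : TBX m S₂ B C)
    (h₁ : bx₁.WellBehaved) (h₂ : bx₂.WellBehaved) :
    (∀ a' : A,
      (do (bx₁.comp bx₂).setL a'; getsS (m := m) (fun s : S₁ × S₂ => bx₁.readL s.1)) =
      (do (bx₁.comp bx₂).setL a'; pure a')) ∧
    (∀ c' : C,
      (do (bx₁.comp bx₂).setR c'; getsS (m := m) (fun s : S₁ × S₂ => bx₂.readR s.2)) =
      (do (bx₁.comp bx₂).setR c'; pure c')) ∧
    (∀ a' : A,
      (do (bx₁.comp bx₂).setL a'; getsS (m := m) (fun s : S₁ × S₂ => bx₁.readR s.1)) =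
      (do (bx₁.comp bx₂).setL a'; getsS (m := m) (fun s : S₁ × S₂ => bx₂.readL s.2))) ∧
    (∀ c' : C,
      (do (bx₁.comp bx₂).setR c'; getsS (m := m) (fun s : S₁ × S₂ => bx₁.readR s.1)) =
      (do (bx₁.comp bx₂).setR c'; getsS (m := m) (fun s : S₁ × S₂ => bx₂.readL s.2))) := by
  refine ⟨fun a => ?_, fun c => ?_, fun a => ?_, fun c => ?_⟩ <;> ext s : 1 <;>
    simp only [TBX.comp_setL_then_run, TBX.comp_setR_then_run, getsS_run, StateT.run_pure]
  · exact StateT.run_bind_eq_of_then_getsS_eq (h₁.slgl a) s.1 fun v t =>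
      (bx₂.setL (bx₁.readR t)).run s.2 >>= fun q => pure (v, t, q.2)
  · exact StateT.run_bind_eq_of_then_getsS_eq (h₂.srgr c) s.2 fun v t =>
      (bx₁.setR (bx₂.readL t)).run s.1 >>= fun p => pure (v, p.2, t)
  · refine bind_congr fun p => ?_
    exact (StateT.run_bind_eq_of_then_getsS_eq (h₂.slgl (bx₁.readR p.2)) s.2 fun v t =>
      pure (v, p.2, t)).symm
  · refine bind_congr fun q => ?_
    exact StateT.run_bind_eq_of_then_getsS_eq (h₁.srgr (bx₂.readL q.2)) s.1 fun v t =>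
      pure (v, t, q.2)
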